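/- Let F: E → ℰ be a morphism of first-quadrant cohomological spectral sequences of abelian groups, converging to filtered graded abutments H* and 𝓗* respectively. If the map on the second page F₂: E₂^{r,s} → ℰ₂^{r,s} is an isomorphism for all bidegrees (r,s) with s ≤ 2, then the induced map H² → 𝓗² on the total degree 2 parts of the abutments is an isomorphism. -/
import Mathlib


set_option maxHeartbeats 1000000
set_option synthInstance.maxHeartbeats 400000

noncomputable section
open Function

/-! ## First-quadrant cohomological spectral sequences of abelian groups -/

/-- A first-quadrant cohomological spectral sequence of abelian groups.  `E m r s` is
the `(r,s)`-entry of the `m`-th page (only the pages `m ≥ 2` are relevant; the pages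
`0`, `1` are harmless padding, e.g. a copy of the second page with zero differentials),
the differential of page `m` has bidegree `(m, 1-m)`, entries vanish outside the first
quadrant, and page `m+1` is the cohomology of page `m`: for each `(r,s)` there is a
surjection `proj` from `ker d_m^{r,s}` onto `E (m+1) r s` whose kernel is exactly the
image of the incoming differential (expressed with `HEq` to avoid index casts). -/
structure CohSS where
  /-- the entries of the pages -/
  E : ℕ → ℤ → ℤ → Type
  /-- each entry is an abelian group -/
  [ab : ∀ m r s, AddCommGroup (E m r s)]
  /-- first-quadrant: entries vanish if `r < 0` or `s < 0` -/
  vanish : ∀ m r s, (r < 0 ∨ s < 0) → ∀ x : E m r s, x = 0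
  /-- the differentials -/
  d : ∀ m r s, E m r s →+ E m (r + m) (s - m + 1)
  d_comp_d : ∀ m r s x, d m (r + m) (s - m + 1) (d m r s x) = 0
  /-- passage to the next page: a surjection from cocycles … -/
  proj : ∀ m r s, ↥(d m r s).ker →+ E (m + 1) r s
  proj_surjective : ∀ m r s, Function.Surjective (proj m r s)
  /-- … whose kernel is the image of the incoming differential -/
  proj_eq_zero_iff : ∀ m r s (x : ↥(d m r s).ker),
    proj m r s x = 0 ↔
      ∃ y : E m (r - m) (s + m - 1), HEq (d m (r - m) (s + m - 1) y) (x : E m r s)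

attribute [instance] CohSS.ab

/-- A morphism of first-quadrant cohomological spectral sequences: maps of all entries
of all pages, commuting with the differentials and compatible with the passage from
each page to the next. -/
structure CohSSHom (A B : CohSS) where
  /-- the maps on entries -/
  f : ∀ m r s, A.E m r s →+ B.E m r s
  comm : ∀ m r s (x : A.E m r s),
    f m (r + m) (s - m + 1) (A.d m r s x) = B.d m r s (f m r s x)
  compat : ∀ m r s (x : A.E m r s) (hx : x ∈ (A.d m r s).ker)
    (hy : f m r s x ∈ (B.d m r s).ker),
    f (m + 1) r s (A.proj m r s ⟨x, hx⟩) = B.proj m r s ⟨f m r s x, hy⟩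

/-- A (finitely) filtered graded abutment of a first-quadrant cohomological spectral
sequence `A`: graded groups `H n` with a decreasing filtration `filt` which is
exhaustive (`filt i (H n) = H n` for `i ≤ 0`) and Hausdorff (`filt i (H n) = 0` for
`i > n`), whose graded pieces `filt r (H n) / filt (r+1) (H n)` (for `n = r + s`) are
identified with the stable value `E m r s` (`m ≥ max (r+1) (s+2)`, where the pages at
`(r,s)` have stabilized) of the spectral sequence. -/
structure Abutment (A : CohSS) where
  /-- the abutment groups `H n` -/
  H : ℤ → Type
  [abH : ∀ n, AddCommGroup (H n)]
  /-- the decreasing filtration `F^i H^n` -/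
  filt : ℤ → ∀ n : ℤ, AddSubgroup (H n)
  filt_mono : ∀ i n, filt (i + 1) n ≤ filt i n
  filt_top : ∀ i n, i ≤ 0 → filt i n = ⊤
  filt_bot : ∀ i n, n < i → filt i n = ⊥
  /-- identification of graded pieces with the stable pages: `E_∞^{r,s} ≅ F^rH^{r+s}/F^{r+1}H^{r+s}` -/
  gradedIso : ∀ (r s n : ℤ), n = r + s → ∀ m : ℕ, r + 1 ≤ (m : ℤ) → s + 2 ≤ (m : ℤ) →
    (↥(filt r n) ⧸ ((filt (r + 1) n).addSubgroupOf (filt r n))) ≃+ A.E m r s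

attribute [instance] Abutment.abH

/-- A morphism of abutments over a morphism `F` of spectral sequences: filtration
compatible maps on the abutments inducing, on the graded pieces, the maps given by `F`
on the stable pages. -/
structure AbutmentHom {A B : CohSS} (F : CohSSHom A B) (hA : Abutment A) (hB : Abutment B) where
  /-- the maps on the abutments -/
  map : ∀ n, hA.H n →+ hB.H n
  filt_map : ∀ i n (x : hA.H n), x ∈ hA.filt i n → map n x ∈ hB.filt i n
  graded_comm : ∀ (r s n : ℤ) (hn : n = r + s) (m : ℕ)
    (h1 : r + 1 ≤ (m : ℤ)) (h2 : s + 2 ≤ (m : ℤ)) (x : ↥(hA.filt r n)),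
    hB.gradedIso r s n hn m h1 h2
        (QuotientAddGroup.mk (⟨map n x.1, filt_map r n x.1 x.2⟩ : ↥(hB.filt r n))) =
      F.f m r s (hA.gradedIso r s n hn m h1 h2 (QuotientAddGroup.mk x))

/-! ## Statement 10 -/

/-! ## Auxiliary lemmas -/

lemma CohSS.E_eq (A : CohSS) (m : ℕ) {r s r' s' : ℤ} (hr : r = r') (hs : s = s') :
    A.E m r s = A.E m r' s' := by rw [hr, hs]

lemma CohSSHom.f_cast {A B : CohSS} (F : CohSSHom A B) (m : ℕ) {r s r' s' : ℤ}
    (hr : r = r') (hs : s = s') (x : A.E m r s) :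
    F.f m r' s' (cast (A.E_eq m hr hs) x) = cast (B.E_eq m hr hs) (F.f m r s x) := by
  subst hr; subst hs; rfl

lemma CohSSHom.triv_bij {A B : CohSS} (F : CohSSHom A B) (m : ℕ) (r s : ℤ)
    (h : r < 0 ∨ s < 0) : Function.Bijective (F.f m r s) := by
  constructor
  · intro x y _
    rw [A.vanish m r s h x, A.vanish m r s h y]
  · intro y
    refine ⟨0, ?_⟩
    rw [map_zero]
    exact (B.vanish m r s h y).symm

lemma CohSSHom.step {A B : CohSS} (F : CohSSHom A B) (m : ℕ) (r s : ℤ)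
    (h1 : Function.Bijective (F.f m r s))
    (h2 : Function.Injective (F.f m (r + m) (s - m + 1)))
    (h3 : Function.Surjective (F.f m (r - m) (s + m - 1))) :
    Function.Bijective (F.f (m + 1) r s) := by
  constructor
  · rw [injective_iff_map_eq_zero]
    intro x hx
    obtain ⟨⟨a, ha⟩, rfl⟩ := A.proj_surjective m r s x
    have ha' : A.d m r s a = 0 := ha
    have hfa : F.f m r s a ∈ (B.d m r s).ker := by
      rw [AddMonoidHom.mem_ker, ← F.comm, ha', map_zero]
    rw [F.compat m r s a ha hfa] at hx
    obtain ⟨y, hy⟩ := (B.proj_eq_zero_iff m r s _).mp hx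
    obtain ⟨w, rfl⟩ := h3 y
    have hr : r - (m : ℤ) + m = r := by ring
    have hs : s + (m : ℤ) - 1 - m + 1 = s := by ring
    have heq1 : HEq (F.f m (r - m + m) (s + m - 1 - m + 1) (A.d m (r - m) (s + m - 1) w))
        (F.f m r s a) := by
      rw [F.comm]; exact hy
    have hc : F.f m r s (cast (A.E_eq m hr hs) (A.d m (r - m) (s + m - 1) w))
        = F.f m r s a := by
      rw [F.f_cast m hr hs]
      exact eq_of_heq ((cast_heq _ _).trans heq1)
    have hca : cast (A.E_eq m hr hs) (A.d m (r - m) (s + m - 1) w) = a := h1.1 hc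
    have : HEq (A.d m (r - m) (s + m - 1) w) (a : A.E m r s) :=
      (cast_heq (A.E_eq m hr hs) _).symm.trans (heq_of_eq hca)
    exact (A.proj_eq_zero_iff m r s ⟨a, ha⟩).mpr ⟨w, this⟩
  · intro y
    obtain ⟨⟨b, hb⟩, rfl⟩ := B.proj_surjective m r s y
    obtain ⟨a, ha⟩ := h1.2 b
    have hker : a ∈ (A.d m r s).ker := by
      rw [AddMonoidHom.mem_ker]
      apply h2
      rw [F.comm, ha, map_zero]
      exact hb
    have hfb : F.f m r s a ∈ (B.d m r s).ker := by rw [ha]; exact hb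
    refine ⟨A.proj m r s ⟨a, hker⟩, ?_⟩
    rw [F.compat m r s a hker hfb]
    congr 1
    exact Subtype.ext ha

lemma CohSSHom.step' {A B : CohSS} (F : CohSSHom A B) (m m' : ℕ) (r s r₂ s₂ r₀ s₀ : ℤ)
    (hm : m' = m + 1)
    (hr2 : r₂ = r + m) (hs2 : s₂ = s - m + 1) (hr0 : r₀ = r - m) (hs0 : s₀ = s + m - 1)
    (h1 : Function.Bijective (F.f m r s))
    (h2 : Function.Injective (F.f m r₂ s₂))
    (h3 : Function.Surjective (F.f m r₀ s₀)) :
    Function.Bijective (F.f m' r s) := by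
  subst hm hr2 hs2 hr0 hs0
  exact F.step m r s h1 h2 h3

/-- The map induced on the `r`-th filtration step of `H²`. -/
def AbutmentHom.gmap {A B : CohSS} {F : CohSSHom A B} {hA : Abutment A} {hB : Abutment B}
    (φ : AbutmentHom F hA hB) (r : ℤ) : ↥(hA.filt r 2) →+ ↥(hB.filt r 2) :=
  ((φ.map 2).comp (hA.filt r 2).subtype).codRestrict (hB.filt r 2)
    (fun x => φ.filt_map r 2 x.1 x.2)

lemma AbutmentHom.gmap_coe {A B : CohSS} {F : CohSSHom A B} {hA : Abutment A} {hB : Abutment B}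
    (φ : AbutmentHom F hA hB) (r : ℤ) (x : ↥(hA.filt r 2)) :
    (φ.gmap r x : hB.H 2) = φ.map 2 x.1 := rfl

lemma AbutmentHom.gmap_bot {A B : CohSS} {F : CohSSHom A B} {hA : Abutment A} {hB : Abutment B}
    (φ : AbutmentHom F hA hB) : Function.Bijective (φ.gmap 3) := by
  have hA3 : ∀ x : ↥(hA.filt 3 2), x = 0 := fun x =>
    Subtype.ext (AddSubgroup.mem_bot.mp (hA.filt_bot 3 2 (by norm_num) ▸ x.2))
  have hB3 : ∀ x : ↥(hB.filt 3 2), x = 0 := fun x =>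
    Subtype.ext (AddSubgroup.mem_bot.mp (hB.filt_bot 3 2 (by norm_num) ▸ x.2))
  constructor
  · intro x y _; rw [hA3 x, hA3 y]
  · intro y; exact ⟨0, by rw [map_zero, hB3 y]⟩

lemma AbutmentHom.gmap_step {A B : CohSS} {F : CohSSHom A B} {hA : Abutment A} {hB : Abutment B}
    (φ : AbutmentHom F hA hB) (r s r' : ℤ) (hr' : r' = r + 1) (hn : (2:ℤ) = r + s)
    (h1 : r + 1 ≤ ((4:ℕ) : ℤ)) (h2 : s + 2 ≤ ((4:ℕ) : ℤ))
    (hF : Function.Bijective (F.f 4 r s))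
    (hnext : Function.Bijective (φ.gmap r')) :
    Function.Bijective (φ.gmap r) := by
  subst hr'
  set eA := hA.gradedIso r s 2 hn 4 h1 h2 with heA
  set eB := hB.gradedIso r s 2 hn 4 h1 h2 with heB
  have hcond : (hA.filt (r+1) 2).addSubgroupOf (hA.filt r 2) ≤
      ((hB.filt (r+1) 2).addSubgroupOf (hB.filt r 2)).comap (φ.gmap r) := by
    intro x hx
    exact φ.filt_map (r+1) 2 x.1 hx
  set g := QuotientAddGroup.map _ _ (φ.gmap r) hcond with hg
  have key : ∀ q, eB (g q) = F.f 4 r s (eA q) := by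
    intro q
    induction q using QuotientAddGroup.induction_on with
    | H x =>
      have : g (QuotientAddGroup.mk x) = QuotientAddGroup.mk (φ.gmap r x) :=
        QuotientAddGroup.map_mk _ _ _ _ _
      rw [this]
      exact φ.graded_comm r s 2 hn 4 h1 h2 x
  have hgbij : Function.Bijective g := by
    have hcomp : ⇑eB ∘ ⇑g = ⇑(F.f 4 r s) ∘ ⇑eA := funext key
    have : Function.Bijective (⇑eB ∘ ⇑g) := by
      rw [hcomp]; exact hF.comp eA.bijective
    exact (Function.Bijective.of_comp_iff' eB.bijective g).mp this
  constructor
  · rw [injective_iff_map_eq_zero]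
    intro x hx
    have hq : g ((QuotientAddGroup.mk x : ↥(hA.filt r 2) ⧸ (hA.filt (r+1) 2).addSubgroupOf (hA.filt r 2))) = 0 := by
      rw [QuotientAddGroup.map_mk, hx, QuotientAddGroup.mk_zero]
    have hq0 : (QuotientAddGroup.mk x : ↥(hA.filt r 2) ⧸ (hA.filt (r+1) 2).addSubgroupOf (hA.filt r 2)) = 0 := by
      apply hgbij.1
      rw [hq, map_zero]
    have hmem : x ∈ (hA.filt (r+1) 2).addSubgroupOf (hA.filt r 2) :=
      (QuotientAddGroup.eq_zero_iff x).mp hq0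
    have hmem' : x.1 ∈ hA.filt (r+1) 2 := hmem
    have : φ.gmap (r+1) ⟨x.1, hmem'⟩ = 0 := by
      apply Subtype.ext
      rw [φ.gmap_coe]
      have : (φ.gmap r x : hB.H 2) = 0 := by rw [hx]; rfl
      exact this
    have h0 := hnext.1 (by rw [this, map_zero] : φ.gmap (r+1) ⟨x.1, hmem'⟩ = φ.gmap (r+1) 0)
    have hx1 : x.1 = 0 := congrArg Subtype.val h0
    exact Subtype.ext hx1
  · intro y
    obtain ⟨q, hq⟩ := hgbij.2 (QuotientAddGroup.mk y)
    obtain ⟨x, rfl⟩ := QuotientAddGroup.mk_surjective q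
    rw [QuotientAddGroup.map_mk] at hq
    have hmem : -(φ.gmap r x) + y ∈ (hB.filt (r+1) 2).addSubgroupOf (hB.filt r 2) :=
      (QuotientAddGroup.eq).mp hq
    have hmem' : (-(φ.gmap r x) + y).1 ∈ hB.filt (r+1) 2 := hmem
    obtain ⟨z, hz⟩ := hnext.2 ⟨(-(φ.gmap r x) + y).1, hmem'⟩
    refine ⟨x + ⟨z.1, hA.filt_mono r 2 z.2⟩, ?_⟩
    apply Subtype.ext
    rw [φ.gmap_coe]
    have hz' : φ.map 2 z.1 = (-(φ.gmap r x) + y).1 := congrArg Subtype.val hz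
    have : (φ.map 2) (x.1 + z.1) = φ.map 2 x.1 + φ.map 2 z.1 := map_add _ _ _
    rw [show ((x + ⟨z.1, hA.filt_mono r 2 z.2⟩ : ↥(hA.filt r 2)) : hA.H 2) = x.1 + z.1 from rfl,
      this, hz']
    show φ.map 2 x.1 + (-(φ.map 2 x.1) + y.1) = y.1
    abel

/-- **Theorem.** Let `F : E → ℰ` be a morphism of first-quadrant cohomological spectral
sequences of abelian groups converging to filtered graded abutments `H*` and `𝓗*`.  If
`F₂ : E₂^{r,s} → ℰ₂^{r,s}` is an isomorphism for all bidegrees `(r,s)` with `s ≤ 2`,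
then the induced map `H² → 𝓗²` is an isomorphism. -/
theorem spectral_sequence_H2_iso
    (A B : CohSS) (F : CohSSHom A B) (hA : Abutment A) (hB : Abutment B)
    (φ : AbutmentHom F hA hB)
    (hiso : ∀ r s : ℤ, s ≤ 2 → Function.Bijective (F.f 2 r s)) :
    Function.Bijective (φ.map 2) := by
  -- page 3 bijectivity at the relevant spots
  have b302 : Function.Bijective (F.f 3 0 2) :=
    F.step' 2 3 0 2 2 1 (-2) 3 (by norm_num) (by norm_num) (by norm_num) (by norm_num)
      (by norm_num) (hiso 0 2 le_rfl) (hiso 2 1 (by norm_num)).1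
      (F.triv_bij 2 (-2) 3 (Or.inl (by norm_num))).2
  have b330 : Function.Bijective (F.f 3 3 0) :=
    F.step' 2 3 3 0 5 (-1) 1 1 (by norm_num) (by norm_num) (by norm_num) (by norm_num)
      (by norm_num) (hiso 3 0 (by norm_num)) (F.triv_bij 2 5 (-1) (Or.inr (by norm_num))).1
      (hiso 1 1 (by norm_num)).2
  have b311 : Function.Bijective (F.f 3 1 1) :=
    F.step' 2 3 1 1 3 0 (-1) 2 (by norm_num) (by norm_num) (by norm_num) (by norm_num)
      (by norm_num) (hiso 1 1 (by norm_num)) (hiso 3 0 (by norm_num)).1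
      (F.triv_bij 2 (-1) 2 (Or.inl (by norm_num))).2
  have b320 : Function.Bijective (F.f 3 2 0) :=
    F.step' 2 3 2 0 4 (-1) 0 1 (by norm_num) (by norm_num) (by norm_num) (by norm_num)
      (by norm_num) (hiso 2 0 (by norm_num)) (F.triv_bij 2 4 (-1) (Or.inr (by norm_num))).1
      (hiso 0 1 (by norm_num)).2
  -- page 4 bijectivity at the relevant spots
  have b402 : Function.Bijective (F.f 4 0 2) :=
    F.step' 3 4 0 2 3 0 (-3) 4 (by norm_num) (by norm_num) (by norm_num) (by norm_num)
      (by norm_num) b302 b330.1 (F.triv_bij 3 (-3) 4 (Or.inl (by norm_num))).2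
  have b411 : Function.Bijective (F.f 4 1 1) :=
    F.step' 3 4 1 1 4 (-1) (-2) 3 (by norm_num) (by norm_num) (by norm_num) (by norm_num)
      (by norm_num) b311 (F.triv_bij 3 4 (-1) (Or.inr (by norm_num))).1
      (F.triv_bij 3 (-2) 3 (Or.inl (by norm_num))).2
  have b420 : Function.Bijective (F.f 4 2 0) :=
    F.step' 3 4 2 0 5 (-2) (-1) 2 (by norm_num) (by norm_num) (by norm_num) (by norm_num)
      (by norm_num) b320 (F.triv_bij 3 5 (-2) (Or.inr (by norm_num))).1
      (F.triv_bij 3 (-1) 2 (Or.inl (by norm_num))).2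
  -- climb the filtration
  have g3 := φ.gmap_bot
  have g2 := φ.gmap_step 2 0 3 (by norm_num) (by norm_num) (by norm_num) (by norm_num) b420 g3
  have g1 := φ.gmap_step 1 1 2 (by norm_num) (by norm_num) (by norm_num) (by norm_num) b411 g2
  have g0 := φ.gmap_step 0 2 1 (by norm_num) (by norm_num) (by norm_num) (by norm_num) b402 g1
  have htopA : hA.filt 0 2 = ⊤ := hA.filt_top 0 2 le_rfl
  have htopB : hB.filt 0 2 = ⊤ := hB.filt_top 0 2 le_rfl
  constructor
  · intro x y hxy
    have hx : x ∈ hA.filt 0 2 := htopA ▸ AddSubgroup.mem_top x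
    have hy : y ∈ hA.filt 0 2 := htopA ▸ AddSubgroup.mem_top y
    have : φ.gmap 0 ⟨x, hx⟩ = φ.gmap 0 ⟨y, hy⟩ := Subtype.ext hxy
    exact congrArg Subtype.val (g0.1 this)
  · intro y
    have hy : y ∈ hB.filt 0 2 := htopB ▸ AddSubgroup.mem_top y
    obtain ⟨x, hx⟩ := g0.2 ⟨y, hy⟩
    exact ⟨x.1, congrArg Subtype.val hx⟩
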